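/- If expression evaluation ⊢ e ⇒ (v, e') under a fixed environment is deterministic in v and e', then single-equation evaluation by the rule Eqs'' is deterministic: if Γ ⊢ (p = e) ⟹ ((p = e₁'), Γ₁') and Γ ⊢ (p = e) ⟹ ((p = e₂'), Γ₂') then e₁' = e₂' and Γ₁' = Γ₂'. -/

import Mathlib

/-- Patterns: a variable or a tuple of sub-patterns. -/
inductive Pat where
  | pvar (x : String)
  | ptup (ps : List Pat)

/-- Mimosa expressions.  Values are the expressions of value shape: the undefined
value `⊥` (`bot`), literals, tuples of values, `None`, `Some v`, and abstractions. -/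
inductive Expr where
  | var (x : String)
  | bot                                   -- the undefined value ⊥
  | int (n : ℤ)                           -- integer constants
  | bool (b : Bool)                       -- boolean constants
  | tup (es : List Expr)                  -- tuple (e, ..., e)
  | pre (e : Expr)                        -- pre e
  | fby (e₁ e₂ : Expr)                    -- e₁ fby e₂
  | arrow (e₁ e₂ : Expr)                  -- e₁ → e₂
  | app (e₁ e₂ : Expr)                    -- application
  | ite (e₁ e₂ e₃ : Expr)                 -- if e₁ then e₂ else e₃
  | noneE                                 -- None
  | someE (e : Expr)                      -- Some e
  | either (e₁ e₂ : Expr)                 -- either e₁ or e₂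
  | lam (pin pout : Pat) (eqs : List (Pat × Expr))  -- λ^{pout}_{pin}. [pᵢ = eᵢ]

/-- Environments map variable names to values. -/
def Env := String → Expr

mutual
/-- Projection `Γ ⇓ₚ`. -/
def proj (Γ : Env) : Pat → Expr
  | .pvar x => Γ x
  | .ptup ps => .tup (projList Γ ps)

def projList (Γ : Env) : List Pat → List Expr
  | [] => []
  | p :: ps => proj Γ p :: projList Γ ps
end

mutual
/-- Destructive update `Γ ⇑ₚ^v`. -/
def upd (Γ : Env) : Pat → Expr → Env
  | .pvar x, v => fun y => if y = x then v else Γ y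
  | .ptup ps, .tup vs => updList Γ ps vs
  | .ptup _, _ => Γ

def updList (Γ : Env) : List Pat → List Expr → Env
  | p :: ps, v :: vs => updList (upd Γ p v) ps vs
  | _, _ => Γ
end

mutual
/-- Big-step evaluation `Γ ⊢ e ⇒ (v, e')` of Mimosa expressions (Figure 6). -/
inductive Eval : Env → Expr → Expr → Expr → Prop where
  | var {Γ x} : Eval Γ (.var x) (Γ x) (.var x)
  | bot {Γ} : Eval Γ .bot .bot .bot
  | int {Γ n} : Eval Γ (.int n) (.int n) (.int n)
  | bool {Γ b} : Eval Γ (.bool b) (.bool b) (.bool b)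
  | tup {Γ es vs es'} : EvalList Γ es vs es' → Eval Γ (.tup es) (.tup vs) (.tup es')
  | pre {Γ e v e'} : Eval Γ e v e' → Eval Γ (.pre e) .bot (.arrow v (.pre e'))
  | fby {Γ e₁ e₂ v₁ e₁'} : Eval Γ e₁ v₁ e₁' → Eval Γ (.fby e₁ e₂) v₁ e₂
  | arrow {Γ e₁ e₂ v₁ e₁' v₂ e₂'} : Eval Γ e₁ v₁ e₁' → Eval Γ e₂ v₂ e₂' →
      Eval Γ (.arrow e₁ e₂) v₁ e₂'
  | iteTrue {Γ e₁ e₂ e₃ e₁' v e₂'} : Eval Γ e₁ (.bool true) e₁' → Eval Γ e₂ v e₂' →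
      Eval Γ (.ite e₁ e₂ e₃) v (.ite e₁' e₂' e₃)
  | iteFalse {Γ e₁ e₂ e₃ e₁' v e₃'} : Eval Γ e₁ (.bool false) e₁' → Eval Γ e₃ v e₃' →
      Eval Γ (.ite e₁ e₂ e₃) v (.ite e₁' e₂ e₃')
  | noneE {Γ} : Eval Γ .noneE .noneE .noneE
  | someE {Γ e v e'} : Eval Γ e v e' → Eval Γ (.someE e) (.someE v) (.someE e')
  | eitherSome {Γ e₁ e₂ v e₁'} : Eval Γ e₁ (.someE v) e₁' →
      Eval Γ (.either e₁ e₂) v (.either e₁' e₂)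
  | eitherNone {Γ e₁ e₂ e₁' v e₂'} : Eval Γ e₁ .noneE e₁' → Eval Γ e₂ v e₂' →
      Eval Γ (.either e₁ e₂) v (.either e₁' e₂')
  | lam {Γ pin pout eqs} : Eval Γ (.lam pin pout eqs) (.lam pin pout eqs) (.lam pin pout eqs)
  | app {Γ e₁ e₂ pin pout eqs d v₂ e₂' eqs' Γ'} :
      Eval Γ e₁ (.lam pin pout eqs) d →
      Eval Γ e₂ v₂ e₂' →
      EvalEqs (upd Γ pin v₂) eqs eqs' Γ' →
      Eval Γ (.app e₁ e₂) (proj Γ' pout) (.app (.lam pin pout eqs') e₂')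

/-- Pointwise evaluation of a list of expressions. -/
inductive EvalList : Env → List Expr → List Expr → List Expr → Prop where
  | nil {Γ} : EvalList Γ [] [] []
  | cons {Γ e v e' es vs es'} : Eval Γ e v e' → EvalList Γ es vs es' →
      EvalList Γ (e :: es) (v :: vs) (e' :: es')

/-- Evaluation of an equation list `[pᵢ = eᵢ]ⁿ` (rule Eqs): all right-hand sides are
evaluated under the fixed-point environment `Γ' = Γ ⇑_{p₁}^{v₁} … ⇑_{pₙ}^{vₙ}`. -/
inductive EvalEqs : Env → List (Pat × Expr) → List (Pat × Expr) → Env → Prop where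
  | mk {Γ Γ' eqs vs es'} :
      Γ' = updList Γ (eqs.map Prod.fst) vs →
      EvalList Γ' (eqs.map Prod.snd) vs es' →
      EvalEqs Γ eqs ((eqs.map Prod.fst).zip es') Γ'
end

/-- Single-equation evaluation rule Eqs'': `Γ ⊢ (p = e) ⟹ ((p = e'), Γ')` where
`Γ' = Γ ⇑ₚ^v` and `Γ' ⊢ e ⇒ (v, e')`. -/
def EvalEq (Γ : Env) (p : Pat) (e e' : Expr) (Γ' : Env) : Prop :=
  ∃ v, Γ' = upd Γ p v ∧ Eval Γ' e v e'

mutual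
/-- Variables occurring in a pattern. -/
def vars : Pat → List String
  | .pvar x => [x]
  | .ptup ps => varsList ps

def varsList : List Pat → List String
  | [] => []
  | p :: ps => vars p ++ varsList ps
end

/-! The two derivations update `Γ` only at the variables of `p`, so their environments agree
outside `vars p`. Causality then forces the same value `v` and residual `e'`, and the
environment `Γ ⇑ₚ^v` is determined by `v`. -/

mutual
theorem upd_apply_of_notMem_vars {Γ : Env} {p : Pat} {v : Expr} {x : String}
    (hx : x ∉ vars p) : upd Γ p v x = Γ x := by
  cases p with
  | pvar y => exact if_neg (by simpa [vars] using hx)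
  | ptup ps =>
    cases v with
    | tup vs => exact updList_apply_of_notMem_varsList (by simpa [vars] using hx)
    | _ => rfl

theorem updList_apply_of_notMem_varsList {Γ : Env} {ps : List Pat} {vs : List Expr}
    {x : String} (hx : x ∉ varsList ps) : updList Γ ps vs x = Γ x := by
  match ps, vs with
  | [], _ => simp only [updList]
  | _ :: _, [] => simp only [updList]
  | p :: ps, v :: vs =>
    simp only [varsList, List.mem_append, not_or] at hx
    calc updList Γ (p :: ps) (v :: vs) x = updList (upd Γ p v) ps vs x := by simp only [updList]
      _ = upd Γ p v x := updList_apply_of_notMem_varsList hx.2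
      _ = Γ x := upd_apply_of_notMem_vars hx.1
end

theorem upd_apply_eq_of_notMem_vars (Γ : Env) {p : Pat} (v₁ v₂ : Expr) {x : String}
    (hx : x ∉ vars p) : upd Γ p v₁ x = upd Γ p v₂ x := by
  rw [upd_apply_of_notMem_vars hx, upd_apply_of_notMem_vars hx]

/-- under the causality assumption (the value and updated expression of
`e` do not depend on the current bindings of the variables of `p`; in particular
evaluation of `e` under a fixed environment is deterministic), single-equation
evaluation by rule Eqs'' is deterministic. -/
theorem eqs''_deterministic (Γ : Env) (p : Pat) (e : Expr)
    (hcausal : ∀ (Δ₁ Δ₂ : Env), (∀ x, x ∉ vars p → Δ₁ x = Δ₂ x) →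
      ∀ v₁ e₁' v₂ e₂', Eval Δ₁ e v₁ e₁' → Eval Δ₂ e v₂ e₂' → v₁ = v₂ ∧ e₁' = e₂')
    (e₁' e₂' : Expr) (Γ₁' Γ₂' : Env)
    (h₁ : EvalEq Γ p e e₁' Γ₁') (h₂ : EvalEq Γ p e e₂' Γ₂') :
    e₁' = e₂' ∧ Γ₁' = Γ₂' := by
  obtain ⟨v₁, rfl, hev₁⟩ := h₁
  obtain ⟨v₂, rfl, hev₂⟩ := h₂
  obtain ⟨rfl, he'⟩ :=
    hcausal _ _ (fun _ hx => upd_apply_eq_of_notMem_vars Γ v₁ v₂ hx) _ _ _ _ hev₁ hev₂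
  exact ⟨he', rfl⟩
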